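/- arXiv:2101.06857 — 2 statements merged into one kernel-verified Lean document; each statement's English description precedes it below -/
import Mathlib

section
/- Suppose the family Λ ⊗ Γ = {(V_i ⊗ W_j, Λ_i ⊗ Γ_j, v_i w_j)}_{i,j} is a g-fusion frame for H ⊗ K with bounds A, B (the frame inequality holding on all elementary tensors f ⊗ g). Then Λ = {(V_i, Λ_i, v_i)}_{i∈I} is a g-fusion frame for H and Γ = {(W_j, Γ_j, w_j)}_{j∈J} is a g-fusion frame for K. -/
noncomputable section

open Submodule ContinuousLinearMap

local notation "⟪" x ", " y "⟫" => @inner ℂ _ _ x y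

/-- An abstract realization of the Hilbert-space tensor product of `H` and `K`:
a map `tmul : H → K → E` whose inner products multiply and whose elementary
tensors have dense span. -/
structure HilbertTensor (H K E : Type*) [NormedAddCommGroup H] [InnerProductSpace ℂ H]
    [NormedAddCommGroup K] [InnerProductSpace ℂ K]
    [NormedAddCommGroup E] [InnerProductSpace ℂ E] where
  tmul : H → K → E
  inner_tmul : ∀ (f f' : H) (g g' : K),
    ⟪tmul f g, tmul f' g'⟫ = ⟪f, f'⟫ * ⟪g, g'⟫
  dense_span : Dense (Submodule.span ℂ (Set.range fun p : H × K => tmul p.1 p.2) : Set E)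

variable {H K E H' K' E' : Type*}
variable [NormedAddCommGroup H] [InnerProductSpace ℂ H]
variable [NormedAddCommGroup K] [InnerProductSpace ℂ K]
variable [NormedAddCommGroup E] [InnerProductSpace ℂ E]
variable [NormedAddCommGroup H'] [InnerProductSpace ℂ H']
variable [NormedAddCommGroup K'] [InnerProductSpace ℂ K']
variable [NormedAddCommGroup E'] [InnerProductSpace ℂ E']

/-- The orthogonal projection onto a (closed) subspace, as an operator `H →L[ℂ] H`. -/
def projL (V : Submodule ℂ H) [HasOrthogonalProjection V] : H →L[ℂ] H :=
  V.subtypeL.comp (orthogonalProjection V)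

/-- `R` is the tensor product operator `Q ⊗ T`, i.e. it is determined on elementary
tensors by `(Q ⊗ T)(f ⊗ g) = Qf ⊗ Tg`. -/
def IsTensorOp (tp : HilbertTensor H K E) (tp' : HilbertTensor H' K' E')
    (Q : H →L[ℂ] H') (T : K →L[ℂ] K') (R : E →L[ℂ] E') : Prop :=
  ∀ (f : H) (g : K), R (tp.tmul f g) = tp'.tmul (Q f) (T g)

/-- The tensor product `V ⊗ W` of subspaces: the closure of the span of elementary
tensors of elements of `V` and `W`. -/
def tsub (tp : HilbertTensor H K E) (V : Submodule ℂ H) (W : Submodule ℂ K) : Submodule ℂ E :=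
  (Submodule.span ℂ {x : E | ∃ f ∈ V, ∃ g ∈ W, x = tp.tmul f g}).topologicalClosure

/-- `{(V i, Λ i, v i)}` is a g-fusion Bessel sequence in `H` with bound `B`. -/
def IsGFusionBessel {ι : Type*} {Hi : ι → Type*}
    [∀ i, NormedAddCommGroup (Hi i)] [∀ i, InnerProductSpace ℂ (Hi i)]
    (V : ι → Submodule ℂ H) [∀ i, HasOrthogonalProjection (V i)]
    (Λ : ∀ i, H →L[ℂ] Hi i) (v : ι → ℝ) (B : ℝ) : Prop :=
  (∀ i, 0 < v i) ∧ 0 < B ∧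
    ∀ f : H, ∑' i, (v i) ^ 2 * ‖Λ i (projL (V i) f)‖ ^ 2 ≤ B * ‖f‖ ^ 2

/-- `{(V i, Λ i, v i)}` is a g-fusion frame for `H` with bounds `A ≤ B`. -/
def IsGFusionFrame {ι : Type*} {Hi : ι → Type*}
    [∀ i, NormedAddCommGroup (Hi i)] [∀ i, InnerProductSpace ℂ (Hi i)]
    (V : ι → Submodule ℂ H) [∀ i, HasOrthogonalProjection (V i)]
    (Λ : ∀ i, H →L[ℂ] Hi i) (v : ι → ℝ) (A B : ℝ) : Prop :=
  (∀ i, 0 < v i) ∧ 0 < A ∧ A ≤ B ∧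
    ∀ f : H, A * ‖f‖ ^ 2 ≤ ∑' i, (v i) ^ 2 * ‖Λ i (projL (V i) f)‖ ^ 2 ∧
      ∑' i, (v i) ^ 2 * ‖Λ i (projL (V i) f)‖ ^ 2 ≤ B * ‖f‖ ^ 2

/-! On an elementary tensor, the projection onto `V i ⊗ W j` and the operator `Λ i ⊗ Γ j` act
factorwise, so the `(i, j)` term of the tensor frame sum at `f ⊗ g` is the product of the `i`-th
term for `f` and the `j`-th term for `g`. The lower frame bound keeps the double sum away from
`0`, hence (`tsum` being `0` off summable families) it is summable and factors as
`S_Λ f * S_Γ g` with `S_Λ = gFusionSum V Λ v`, while `‖f ⊗ g‖ = ‖f‖ * ‖g‖`. Freezing a nonzero `g₀` turns the tensor bounds into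
the frame bounds `A ‖g₀‖² / S_Γ g₀` and `B ‖g₀‖² / S_Γ g₀` for `Λ`, and symmetrically for `Γ`. -/

lemma projL_eq_starProjection (V : Submodule ℂ H) [HasOrthogonalProjection V] :
    projL V = V.starProjection :=
  rfl

namespace HilbertTensor

variable (tp : HilbertTensor H K E)

lemma norm_tmul (f : H) (g : K) : ‖tp.tmul f g‖ = ‖f‖ * ‖g‖ := by
  have h := tp.inner_tmul f f g g
  simp only [inner_self_eq_norm_sq_to_K] at h
  refine (pow_left_inj₀ (norm_nonneg _) (by positivity) two_ne_zero).1 ?_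
  rw [mul_pow]
  exact_mod_cast h

lemma projL_tsub_tmul (V : Submodule ℂ H) (W : Submodule ℂ K) [HasOrthogonalProjection V]
    [HasOrthogonalProjection W] [HasOrthogonalProjection (tsub tp V W)] (f : H) (g : K) :
    projL (tsub tp V W) (tp.tmul f g) = tp.tmul (projL V f) (projL W g) := by
  simp only [projL_eq_starProjection]
  refine eq_starProjection_of_mem_of_inner_eq_zero
    (le_topologicalClosure _ (subset_span ⟨_, coe_mem _, _, coe_mem _, rfl⟩)) fun x hx => ?_
  suffices tsub tp V W ≤
      LinearMap.ker (innerₛₗ ℂ (tp.tmul f g - tp.tmul (V.starProjection f) (W.starProjection g))) from this hx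
  refine topologicalClosure_minimal _ (span_le.2 ?_) (isClosed_ker (innerSL ℂ _))
  rintro _ ⟨u, hu, u', hu', rfl⟩
  have hf : ⟪f, u⟫ = ⟪V.starProjection f, u⟫ :=
    sub_eq_zero.1 (by simpa only [inner_sub_left] using V.starProjection_inner_eq_zero f u hu)
  have hg : ⟪g, u'⟫ = ⟪W.starProjection g, u'⟫ :=
    sub_eq_zero.1 (by simpa only [inner_sub_left] using W.starProjection_inner_eq_zero g u' hu')
  simp [tp.inner_tmul, hf, hg]

end HilbertTensor

lemma IsTensorOp.norm_apply_projL_tsub_tmul {tp : HilbertTensor H K E}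
    {tp' : HilbertTensor H' K' E'} {Q : H →L[ℂ] H'} {T : K →L[ℂ] K'} {R : E →L[ℂ] E'}
    (hR : IsTensorOp tp tp' Q T R) (V : Submodule ℂ H) (W : Submodule ℂ K)
    [HasOrthogonalProjection V] [HasOrthogonalProjection W]
    [HasOrthogonalProjection (tsub tp V W)] (f : H) (g : K) :
    ‖R (projL (tsub tp V W) (tp.tmul f g))‖ = ‖Q (projL V f)‖ * ‖T (projL W g)‖ := by
  rw [tp.projL_tsub_tmul, hR, tp'.norm_tmul]

theorem tsum_prod_mul_eq_mul_tsum_of_ne_zero {ι κ 𝕜 : Type*} [NormedField 𝕜] [CompleteSpace 𝕜]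
    {a : ι → 𝕜} {b : κ → 𝕜} (h : ∑' p : ι × κ, a p.1 * b p.2 ≠ 0) :
    ∑' p : ι × κ, a p.1 * b p.2 = (∑' i, a i) * ∑' j, b j := by
  have hab : Summable fun p : ι × κ => a p.1 * b p.2 := by
    by_contra hns
    exact h (tsum_eq_zero_of_not_summable hns)
  obtain ⟨⟨i₀, j₀⟩, hp⟩ : ∃ p : ι × κ, a p.1 * b p.2 ≠ 0 := by
    by_contra! hz
    exact h (by simp [hz])
  have ha : Summable a :=
    (summable_mul_right_iff (right_ne_zero_of_mul hp)).1 (hab.prod_symm.prod_factor j₀)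
  have hb : Summable b := (summable_mul_left_iff (left_ne_zero_of_mul hp)).1 (hab.prod_factor i₀)
  exact (ha.tsum_mul_tsum hb hab).symm

section GFusion

variable {ι : Type*} {Hi : ι → Type*} [∀ i, NormedAddCommGroup (Hi i)]
  [∀ i, InnerProductSpace ℂ (Hi i)] (V : ι → Submodule ℂ H) [∀ i, HasOrthogonalProjection (V i)]
  (Λ : ∀ i, H →L[ℂ] Hi i) (v : ι → ℝ)

def gFusionSum (f : H) : ℝ :=
  ∑' i, v i ^ 2 * ‖Λ i (projL (V i) f)‖ ^ 2

lemma gFusionSum_nonneg (f : H) : 0 ≤ gFusionSum V Λ v f :=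
  tsum_nonneg fun _ => by positivity

lemma isGFusionFrame_of_forall_ne_zero {A B : ℝ} (hv : ∀ i, 0 < v i) (hA : 0 < A) (hAB : A ≤ B)
    (h : ∀ f ≠ 0, A * ‖f‖ ^ 2 ≤ gFusionSum V Λ v f ∧ gFusionSum V Λ v f ≤ B * ‖f‖ ^ 2) :
    IsGFusionFrame V Λ v A B := by
  refine ⟨hv, hA, hAB, fun f => ?_⟩
  rcases eq_or_ne f 0 with rfl | hf
  · simp
  · exact h f hf

theorem exists_isGFusionFrame_of_mul_bounds [Nontrivial H] {G : Type*} [NormedAddCommGroup G]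
    [Nontrivial G] {t : G → ℝ} (ht : ∀ g, 0 ≤ t g) {A B : ℝ} (hv : ∀ i, 0 < v i) (hA : 0 < A)
    (hAB : A ≤ B)
    (h : ∀ f g, f ≠ 0 → g ≠ 0 → A * (‖f‖ ^ 2 * ‖g‖ ^ 2) ≤ gFusionSum V Λ v f * t g ∧
      gFusionSum V Λ v f * t g ≤ B * (‖f‖ ^ 2 * ‖g‖ ^ 2)) :
    ∃ A₁ B₁ : ℝ, IsGFusionFrame V Λ v A₁ B₁ := by
  obtain ⟨f₀, hf₀⟩ := exists_ne (0 : H)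
  obtain ⟨g₀, hg₀⟩ := exists_ne (0 : G)
  have ht₀ : 0 < t g₀ := by
    refine (ht g₀).lt_of_ne' fun h₀ => ?_
    have := (h f₀ g₀ hf₀ hg₀).1
    rw [h₀, mul_zero] at this
    exact this.not_gt (by positivity)
  refine ⟨A * ‖g₀‖ ^ 2 / t g₀, B * ‖g₀‖ ^ 2 / t g₀, isGFusionFrame_of_forall_ne_zero V Λ v hv
    (by positivity) (by gcongr) fun f hf => ?_⟩
  obtain ⟨hlow, hup⟩ := h f g₀ hf hg₀
  rw [div_mul_eq_mul_div, div_mul_eq_mul_div, div_le_iff₀ ht₀, le_div_iff₀ ht₀]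
  exact ⟨by linear_combination hlow, by linear_combination hup⟩

variable {κ : Type*} {Kj : κ → Type*} [∀ j, NormedAddCommGroup (Kj j)]
  [∀ j, InnerProductSpace ℂ (Kj j)] {Eij : ι → κ → Type*} [∀ i j, NormedAddCommGroup (Eij i j)]
  [∀ i j, InnerProductSpace ℂ (Eij i j)]

theorem tsum_tensor_tmul_eq_gFusionSum_mul_of_ne_zero (tp : HilbertTensor H K E)
    (tpij : ∀ i j, HilbertTensor (Hi i) (Kj j) (Eij i j)) (W : κ → Submodule ℂ K)
    [∀ j, HasOrthogonalProjection (W j)] [∀ i j, HasOrthogonalProjection (tsub tp (V i) (W j))]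
    (Γ : ∀ j, K →L[ℂ] Kj j) (w : κ → ℝ) (R : ∀ i j, E →L[ℂ] Eij i j)
    (hR : ∀ i j, IsTensorOp tp (tpij i j) (Λ i) (Γ j) (R i j)) (f : H) (g : K)
    (h : ∑' p : ι × κ, (v p.1 * w p.2) ^ 2 *
      ‖R p.1 p.2 (projL (tsub tp (V p.1) (W p.2)) (tp.tmul f g))‖ ^ 2 ≠ 0) :
    ∑' p : ι × κ, (v p.1 * w p.2) ^ 2 *
      ‖R p.1 p.2 (projL (tsub tp (V p.1) (W p.2)) (tp.tmul f g))‖ ^ 2 =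
        gFusionSum V Λ v f * gFusionSum W Γ w g := by
  have hterm : ∀ p : ι × κ, (v p.1 * w p.2) ^ 2 *
      ‖R p.1 p.2 (projL (tsub tp (V p.1) (W p.2)) (tp.tmul f g))‖ ^ 2 =
        v p.1 ^ 2 * ‖Λ p.1 (projL (V p.1) f)‖ ^ 2 * (w p.2 ^ 2 * ‖Γ p.2 (projL (W p.2) g)‖ ^ 2) := by
    rintro ⟨i, j⟩
    rw [(hR i j).norm_apply_projL_tsub_tmul]
    ring
  rw [tsum_congr hterm] at h ⊢
  exact tsum_prod_mul_eq_mul_tsum_of_ne_zero (a := fun i => v i ^ 2 * ‖Λ i (projL (V i) f)‖ ^ 2)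
    (b := fun j => w j ^ 2 * ‖Γ j (projL (W j) g)‖ ^ 2) h

end GFusion

theorem stmt_8_general {ι κ : Type*}
    [Nontrivial H] [Nontrivial K]
    {Hi : ι → Type*} [∀ i, NormedAddCommGroup (Hi i)] [∀ i, InnerProductSpace ℂ (Hi i)]
    {Kj : κ → Type*} [∀ j, NormedAddCommGroup (Kj j)] [∀ j, InnerProductSpace ℂ (Kj j)]
    {Eij : ι → κ → Type*} [∀ i j, NormedAddCommGroup (Eij i j)]
    [∀ i j, InnerProductSpace ℂ (Eij i j)]
    (tp : HilbertTensor H K E) (tpij : ∀ i j, HilbertTensor (Hi i) (Kj j) (Eij i j))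
    (V : ι → Submodule ℂ H) [∀ i, HasOrthogonalProjection (V i)]
    (W : κ → Submodule ℂ K) [∀ j, HasOrthogonalProjection (W j)]
    [∀ i j, HasOrthogonalProjection (tsub tp (V i) (W j))]
    (Λ : ∀ i, H →L[ℂ] Hi i) (Γ : ∀ j, K →L[ℂ] Kj j)
    (v : ι → ℝ) (w : κ → ℝ) (hv : ∀ i, 0 < v i) (hw : ∀ j, 0 < w j)
    (A B : ℝ) (hA : 0 < A) (hAB : A ≤ B)
    (Rij : ∀ i j, E →L[ℂ] Eij i j)
    (hRij : ∀ i j, IsTensorOp tp (tpij i j) (Λ i) (Γ j) (Rij i j))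
    (hframe : ∀ (f : H) (g : K), f ≠ 0 → g ≠ 0 →
      A * ‖tp.tmul f g‖ ^ 2 ≤
        ∑' p : ι × κ, (v p.1 * w p.2) ^ 2 *
          ‖Rij p.1 p.2 (projL (tsub tp (V p.1) (W p.2)) (tp.tmul f g))‖ ^ 2 ∧
      ∑' p : ι × κ, (v p.1 * w p.2) ^ 2 *
          ‖Rij p.1 p.2 (projL (tsub tp (V p.1) (W p.2)) (tp.tmul f g))‖ ^ 2 ≤
        B * ‖tp.tmul f g‖ ^ 2) :
    (∃ A₁ B₁ : ℝ, IsGFusionFrame V Λ v A₁ B₁) ∧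
      (∃ C₁ D₁ : ℝ, IsGFusionFrame W Γ w C₁ D₁) := by
  have hprod : ∀ f g, f ≠ 0 → g ≠ 0 →
      A * (‖f‖ ^ 2 * ‖g‖ ^ 2) ≤ gFusionSum V Λ v f * gFusionSum W Γ w g ∧
        gFusionSum V Λ v f * gFusionSum W Γ w g ≤ B * (‖f‖ ^ 2 * ‖g‖ ^ 2) := by
    intro f g hf hg
    obtain ⟨hlow, hup⟩ := hframe f g hf hg
    have hpos : 0 < A * ‖tp.tmul f g‖ ^ 2 := by rw [tp.norm_tmul]; positivity
    have hsum := tsum_tensor_tmul_eq_gFusionSum_mul_of_ne_zero V Λ v tp tpij W Γ w Rij hRij f g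
      (hpos.trans_le hlow).ne'
    rw [hsum, tp.norm_tmul, mul_pow] at hlow hup
    exact ⟨hlow, hup⟩
  refine ⟨exists_isGFusionFrame_of_mul_bounds V Λ v (gFusionSum_nonneg W Γ w) hv hA hAB hprod,
    exists_isGFusionFrame_of_mul_bounds W Γ w (gFusionSum_nonneg V Λ v) hw hA hAB
      fun g f hg hf => ?_⟩
  rw [mul_comm (‖g‖ ^ 2), mul_comm (gFusionSum W Γ w g)]
  exact hprod f g hf hg

/-- if `Λ ⊗ Γ` is a g-fusion frame for `H ⊗ K` (the frame inequality
holding on all elementary tensors of nonzero vectors), then `Λ` is a g-fusion frame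
for `H` and `Γ` is a g-fusion frame for `K`. -/
theorem stmt_8 {ι κ : Type*} [CompleteSpace H] [CompleteSpace K] [CompleteSpace E]
    [Nontrivial H] [Nontrivial K]
    {Hi : ι → Type*} [∀ i, NormedAddCommGroup (Hi i)] [∀ i, InnerProductSpace ℂ (Hi i)]
    {Kj : κ → Type*} [∀ j, NormedAddCommGroup (Kj j)] [∀ j, InnerProductSpace ℂ (Kj j)]
    {Eij : ι → κ → Type*} [∀ i j, NormedAddCommGroup (Eij i j)]
    [∀ i j, InnerProductSpace ℂ (Eij i j)]
    (tp : HilbertTensor H K E) (tpij : ∀ i j, HilbertTensor (Hi i) (Kj j) (Eij i j))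
    (V : ι → Submodule ℂ H) [∀ i, HasOrthogonalProjection (V i)]
    (W : κ → Submodule ℂ K) [∀ j, HasOrthogonalProjection (W j)]
    [∀ i j, HasOrthogonalProjection (tsub tp (V i) (W j))]
    (Λ : ∀ i, H →L[ℂ] Hi i) (Γ : ∀ j, K →L[ℂ] Kj j)
    (v : ι → ℝ) (w : κ → ℝ) (hv : ∀ i, 0 < v i) (hw : ∀ j, 0 < w j)
    (A B : ℝ) (hA : 0 < A) (hAB : A ≤ B)
    (Rij : ∀ i j, E →L[ℂ] Eij i j)
    (hRij : ∀ i j, IsTensorOp tp (tpij i j) (Λ i) (Γ j) (Rij i j))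
    (hframe : ∀ (f : H) (g : K), f ≠ 0 → g ≠ 0 →
      A * ‖tp.tmul f g‖ ^ 2 ≤
        ∑' p : ι × κ, (v p.1 * w p.2) ^ 2 *
          ‖Rij p.1 p.2 (projL (tsub tp (V p.1) (W p.2)) (tp.tmul f g))‖ ^ 2 ∧
      ∑' p : ι × κ, (v p.1 * w p.2) ^ 2 *
          ‖Rij p.1 p.2 (projL (tsub tp (V p.1) (W p.2)) (tp.tmul f g))‖ ^ 2 ≤
        B * ‖tp.tmul f g‖ ^ 2) :
    (∃ A₁ B₁ : ℝ, IsGFusionFrame V Λ v A₁ B₁) ∧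
      (∃ C₁ D₁ : ℝ, IsGFusionFrame W Γ w C₁ D₁) :=
  stmt_8_general tp tpij V W Λ Γ v w hv hw A B hA hAB Rij hRij hframe
end
end

section
/- Let Λ and Γ be g-fusion Bessel sequences in H and K with synthesis operators T_Λ and T_Γ. Then the synthesis operator of the tensor product family satisfies T_{Λ⊗Γ} = T_Λ ⊗ T_Γ as operators from ℓ²({H_i ⊗ K_j}) ≅ ℓ²({H_i}) ⊗ ℓ²({K_j}) to H ⊗ K, and consequently the analysis operator satisfies T*_{Λ⊗Γ} = T*_Λ ⊗ T*_Γ. -/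
/-!
Everything is tested against elementary tensors `f ⊗ g`, whose span is dense. The projection onto
`V ⊗ W` sends `f ⊗ g` to `P_V f ⊗ P_W g`, so the `(i, j)` coordinate of `T*_{Λ⊗Γ} (f ⊗ g)` is
`v_i w_j Λ_i P_{V_i} f ⊗ Γ_j P_{W_j} g = (T*_Λ f)_i ⊗ (T*_Γ g)_j`. Dually, for `z = (x_i ⊗ y_j)`
the double series `⟪T_{Λ⊗Γ} z, f ⊗ g⟫ = ⟪z, T*_{Λ⊗Γ} (f ⊗ g)⟫` factors as
`⟪x, T*_Λ f⟫ ⟪y, T*_Γ g⟫ = ⟪T_Λ x ⊗ T_Γ y, f ⊗ g⟫`.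
-/

noncomputable section

open Submodule ContinuousLinearMap

local notation "⟪" x ", " y "⟫" => @inner ℂ _ _ x y

variable {H K E H' K' E' : Type*}
variable [NormedAddCommGroup H] [InnerProductSpace ℂ H]
variable [NormedAddCommGroup K] [InnerProductSpace ℂ K]
variable [NormedAddCommGroup E] [InnerProductSpace ℂ E]
variable [NormedAddCommGroup H'] [InnerProductSpace ℂ H']
variable [NormedAddCommGroup K'] [InnerProductSpace ℂ K']
variable [NormedAddCommGroup E'] [InnerProductSpace ℂ E']

namespace HilbertTensor

variable (tp : HilbertTensor H K E)

theorem ext_inner_tmul {a b : E} (h : ∀ (f : H) (g : K), ⟪a, tp.tmul f g⟫ = ⟪b, tp.tmul f g⟫) :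
    a = b :=
  have : innerSL ℂ a = innerSL ℂ b := ContinuousLinearMap.ext_on tp.dense_span <| by
    rintro _ ⟨⟨f, g⟩, rfl⟩
    exact h f g
  ext_inner_right ℂ (DFunLike.congr_fun this)

theorem tmul_smul_smul (c d : ℂ) (a : H) (b : K) :
    tp.tmul (c • a) (d • b) = (c * d) • tp.tmul a b :=
  tp.ext_inner_tmul fun f g => by
    rw [inner_smul_left, tp.inner_tmul, tp.inner_tmul, inner_smul_left, inner_smul_left, map_mul]
    ring

theorem starProjection_tsub_tmul (V : Submodule ℂ H) (W : Submodule ℂ K)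
    [HasOrthogonalProjection V] [HasOrthogonalProjection W]
    [HasOrthogonalProjection (tsub tp V W)] (f : H) (g : K) :
    (tsub tp V W).starProjection (tp.tmul f g) =
      tp.tmul (V.starProjection f) (W.starProjection g) := by
  refine eq_starProjection_of_mem_of_inner_eq_zero
    (le_topologicalClosure _ (subset_span ⟨_, coe_mem _, _, coe_mem _, rfl⟩)) fun u hu => ?_
  have hgen : Set.EqOn
      (innerSL ℂ (tp.tmul f g - tp.tmul (V.starProjection f) (W.starProjection g)))
      (0 : E →L[ℂ] ℂ) {x : E | ∃ f' ∈ V, ∃ g' ∈ W, x = tp.tmul f' g'} := by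
    rintro _ ⟨f', hf', g', hg', rfl⟩
    simp only [innerSL_apply_apply, zero_apply, inner_sub_left, tp.inner_tmul,
      inner_starProjection_left_eq_right, starProjection_eq_self_iff.2 hf',
      starProjection_eq_self_iff.2 hg', sub_self]
  exact ContinuousLinearMap.eqOn_closure_span hgen (by rwa [← topologicalClosure_coe])

end HilbertTensor

theorem lp.adjoint_apply_of_eq_tsum {𝕜 F ι : Type*} [RCLike 𝕜] [NormedAddCommGroup F]
    [InnerProductSpace 𝕜 F] [CompleteSpace F] {G : ι → Type*} [∀ i, NormedAddCommGroup (G i)]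
    [∀ i, InnerProductSpace 𝕜 (G i)] [∀ i, CompleteSpace (G i)]
    (T : lp G 2 →L[𝕜] F) (S : ∀ i, G i →L[𝕜] F) (hT : ∀ x, T x = ∑' i, S i (x i))
    (f : F) (i : ι) : adjoint T f i = adjoint (S i) f := by
  classical
  refine ext_inner_right 𝕜 fun c => ?_
  have hsingle : T (lp.single 2 i c) = S i c := by
    rw [hT, tsum_eq_single i fun j hj => by rw [lp.single_apply_ne 2 i c hj, map_zero],
      lp.single_apply_self]
  rw [← lp.inner_single_right, adjoint_inner_left, hsingle, adjoint_inner_left]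

theorem adjoint_synthesis_apply [CompleteSpace H] {ι : Type*} {Hi : ι → Type*}
    [∀ i, NormedAddCommGroup (Hi i)] [∀ i, InnerProductSpace ℂ (Hi i)] [∀ i, CompleteSpace (Hi i)]
    (V : ι → Submodule ℂ H) [∀ i, HasOrthogonalProjection (V i)] (Λ : ∀ i, H →L[ℂ] Hi i)
    (v : ι → ℝ) (T : lp Hi 2 →L[ℂ] H)
    (hT : ∀ x : lp Hi 2, T x = ∑' i, v i • projL (V i) (adjoint (Λ i) (x i))) (f : H) (i : ι) :
    adjoint T f i = (v i : ℂ) • Λ i ((V i).starProjection f) := by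
  rw [lp.adjoint_apply_of_eq_tsum T (fun i => (v i : ℂ) • ((V i).starProjection ∘L adjoint (Λ i)))
    hT, map_smulₛₗ, adjoint_comp, adjoint_adjoint, (isSelfAdjoint_starProjection _).adjoint_eq]
  simp only [Complex.conj_ofReal, Complex.coe_smul, smul_apply, comp_apply]

section TensorFamilies

variable {ι κ : Type*} {Hi : ι → Type*} [∀ i, NormedAddCommGroup (Hi i)]
  [∀ i, InnerProductSpace ℂ (Hi i)] {Kj : κ → Type*} [∀ j, NormedAddCommGroup (Kj j)]
  [∀ j, InnerProductSpace ℂ (Kj j)] {Eij : ι → κ → Type*} [∀ i j, NormedAddCommGroup (Eij i j)]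
  [∀ i j, InnerProductSpace ℂ (Eij i j)] (tpij : ∀ i j, HilbertTensor (Hi i) (Kj j) (Eij i j))

theorem lp.inner_eq_inner_mul_inner_of_tmul {x x' : lp Hi 2} {y y' : lp Kj 2}
    {z z' : lp (fun p : ι × κ => Eij p.1 p.2) 2}
    (hz : ∀ p : ι × κ, z p = (tpij p.1 p.2).tmul (x p.1) (y p.2))
    (hz' : ∀ p : ι × κ, z' p = (tpij p.1 p.2).tmul (x' p.1) (y' p.2)) :
    ⟪z, z'⟫ = ⟪x, x'⟫ * ⟪y, y'⟫ := by
  have hx : Summable fun i => ‖⟪x i, x' i⟫‖ := summable_norm_iff.2 (lp.summable_inner x x')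
  have hy : Summable fun j => ‖⟪y j, y' j⟫‖ := summable_norm_iff.2 (lp.summable_inner y y')
  rw [lp.inner_eq_tsum x, lp.inner_eq_tsum y, tsum_mul_tsum_of_summable_norm hx hy,
    lp.inner_eq_tsum]
  exact tsum_congr fun p => by rw [hz, hz', HilbertTensor.inner_tmul]

variable [CompleteSpace H] [CompleteSpace K] [CompleteSpace E] [∀ i, CompleteSpace (Hi i)]
  [∀ j, CompleteSpace (Kj j)] [∀ i j, CompleteSpace (Eij i j)]

theorem HilbertTensor.apply_eq_tmul_of_adjoint_tmul (tp : HilbertTensor H K E)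
    {A : lp Hi 2 →L[ℂ] H} {B : lp Kj 2 →L[ℂ] K} {C : lp (fun p : ι × κ => Eij p.1 p.2) 2 →L[ℂ] E}
    (hC : ∀ (f : H) (g : K) (p : ι × κ),
      adjoint C (tp.tmul f g) p = (tpij p.1 p.2).tmul (adjoint A f p.1) (adjoint B g p.2))
    {x : lp Hi 2} {y : lp Kj 2} {z : lp (fun p : ι × κ => Eij p.1 p.2) 2}
    (hz : ∀ p : ι × κ, z p = (tpij p.1 p.2).tmul (x p.1) (y p.2)) :
    C z = tp.tmul (A x) (B y) :=
  tp.ext_inner_tmul fun f g => by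
    rw [← adjoint_inner_right, lp.inner_eq_inner_mul_inner_of_tmul tpij hz (hC f g),
      adjoint_inner_right, adjoint_inner_right, tp.inner_tmul]

end TensorFamilies

theorem stmt_11_general {ι κ : Type*} [CompleteSpace H] [CompleteSpace K] [CompleteSpace E]
    {Hi : ι → Type*} [∀ i, NormedAddCommGroup (Hi i)] [∀ i, InnerProductSpace ℂ (Hi i)]
    [∀ i, CompleteSpace (Hi i)]
    {Kj : κ → Type*} [∀ j, NormedAddCommGroup (Kj j)] [∀ j, InnerProductSpace ℂ (Kj j)]
    [∀ j, CompleteSpace (Kj j)]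
    {Eij : ι → κ → Type*} [∀ i j, NormedAddCommGroup (Eij i j)]
    [∀ i j, InnerProductSpace ℂ (Eij i j)] [∀ i j, CompleteSpace (Eij i j)]
    (tp : HilbertTensor H K E) (tpij : ∀ i j, HilbertTensor (Hi i) (Kj j) (Eij i j))
    (V : ι → Submodule ℂ H) [∀ i, HasOrthogonalProjection (V i)]
    (W : κ → Submodule ℂ K) [∀ j, HasOrthogonalProjection (W j)]
    [∀ i j, HasOrthogonalProjection (tsub tp (V i) (W j))]
    (Λ : ∀ i, H →L[ℂ] Hi i) (Γ : ∀ j, K →L[ℂ] Kj j)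
    (v : ι → ℝ) (w : κ → ℝ)
    (Rij : ∀ i j, E →L[ℂ] Eij i j)
    (hRij : ∀ i j, IsTensorOp tp (tpij i j) (Λ i) (Γ j) (Rij i j))
    (TΛ : lp (fun i => Hi i) 2 →L[ℂ] H) (TΓ : lp (fun j => Kj j) 2 →L[ℂ] K)
    (TΛΓ : lp (fun p : ι × κ => Eij p.1 p.2) 2 →L[ℂ] E)
    (hTΛ : ∀ x : lp (fun i => Hi i) 2,
      TΛ x = ∑' i, v i • projL (V i) (ContinuousLinearMap.adjoint (Λ i) (x i)))
    (hTΓ : ∀ y : lp (fun j => Kj j) 2,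
      TΓ y = ∑' j, w j • projL (W j) (ContinuousLinearMap.adjoint (Γ j) (y j)))
    (hTΛΓ : ∀ z : lp (fun p : ι × κ => Eij p.1 p.2) 2,
      TΛΓ z = ∑' p : ι × κ, (v p.1 * w p.2) •
        projL (tsub tp (V p.1) (W p.2)) (ContinuousLinearMap.adjoint (Rij p.1 p.2) (z p))) :
    (∀ (x : lp (fun i => Hi i) 2) (y : lp (fun j => Kj j) 2)
        (z : lp (fun p : ι × κ => Eij p.1 p.2) 2),
      (∀ p : ι × κ, z p = (tpij p.1 p.2).tmul (x p.1) (y p.2)) →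
        TΛΓ z = tp.tmul (TΛ x) (TΓ y)) ∧
    (∀ (f : H) (g : K) (p : ι × κ),
      (ContinuousLinearMap.adjoint TΛΓ) (tp.tmul f g) p =
        (tpij p.1 p.2).tmul ((ContinuousLinearMap.adjoint TΛ) f p.1)
          ((ContinuousLinearMap.adjoint TΓ) g p.2)) := by
  have hAΛ := adjoint_synthesis_apply V Λ v TΛ hTΛ
  have hAΓ := adjoint_synthesis_apply W Γ w TΓ hTΓ
  have hAΛΓ := adjoint_synthesis_apply (fun p : ι × κ => tsub tp (V p.1) (W p.2))
    (fun p => Rij p.1 p.2) (fun p => v p.1 * w p.2) TΛΓ hTΛΓ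
  have analysis : ∀ (f : H) (g : K) (p : ι × κ), adjoint TΛΓ (tp.tmul f g) p =
      (tpij p.1 p.2).tmul (adjoint TΛ f p.1) (adjoint TΓ g p.2) := by
    intro f g p
    rw [hAΛΓ, tp.starProjection_tsub_tmul, hRij, hAΛ, hAΓ, (tpij p.1 p.2).tmul_smul_smul,
      Complex.ofReal_mul]
  exact ⟨fun x y z hz => tp.apply_eq_tmul_of_adjoint_tmul tpij analysis hz, analysis⟩

/-- `T_{Λ⊗Γ} = T_Λ ⊗ T_Γ` and consequently `T*_{Λ⊗Γ} = T*_Λ ⊗ T*_Γ`,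
under the identification `ℓ²({H_i ⊗ K_j}) ≅ ℓ²({H_i}) ⊗ ℓ²({K_j})` sending the
elementary tensor `x ⊗ y` to the family `(x_i ⊗ y_j)_{ij}`. -/
theorem stmt_11 {ι κ : Type*} [CompleteSpace H] [CompleteSpace K] [CompleteSpace E]
    {Hi : ι → Type*} [∀ i, NormedAddCommGroup (Hi i)] [∀ i, InnerProductSpace ℂ (Hi i)]
    [∀ i, CompleteSpace (Hi i)]
    {Kj : κ → Type*} [∀ j, NormedAddCommGroup (Kj j)] [∀ j, InnerProductSpace ℂ (Kj j)]
    [∀ j, CompleteSpace (Kj j)]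
    {Eij : ι → κ → Type*} [∀ i j, NormedAddCommGroup (Eij i j)]
    [∀ i j, InnerProductSpace ℂ (Eij i j)] [∀ i j, CompleteSpace (Eij i j)]
    (tp : HilbertTensor H K E) (tpij : ∀ i j, HilbertTensor (Hi i) (Kj j) (Eij i j))
    (V : ι → Submodule ℂ H) [∀ i, HasOrthogonalProjection (V i)]
    (W : κ → Submodule ℂ K) [∀ j, HasOrthogonalProjection (W j)]
    [∀ i j, HasOrthogonalProjection (tsub tp (V i) (W j))]
    (Λ : ∀ i, H →L[ℂ] Hi i) (Γ : ∀ j, K →L[ℂ] Kj j)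
    (v : ι → ℝ) (w : κ → ℝ) (B D : ℝ)
    (hΛ : IsGFusionBessel V Λ v B) (hΓ : IsGFusionBessel W Γ w D)
    (Rij : ∀ i j, E →L[ℂ] Eij i j)
    (hRij : ∀ i j, IsTensorOp tp (tpij i j) (Λ i) (Γ j) (Rij i j))
    (TΛ : lp (fun i => Hi i) 2 →L[ℂ] H) (TΓ : lp (fun j => Kj j) 2 →L[ℂ] K)
    (TΛΓ : lp (fun p : ι × κ => Eij p.1 p.2) 2 →L[ℂ] E)
    (hTΛ : ∀ x : lp (fun i => Hi i) 2,
      TΛ x = ∑' i, v i • projL (V i) (ContinuousLinearMap.adjoint (Λ i) (x i)))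
    (hTΓ : ∀ y : lp (fun j => Kj j) 2,
      TΓ y = ∑' j, w j • projL (W j) (ContinuousLinearMap.adjoint (Γ j) (y j)))
    (hTΛΓ : ∀ z : lp (fun p : ι × κ => Eij p.1 p.2) 2,
      TΛΓ z = ∑' p : ι × κ, (v p.1 * w p.2) •
        projL (tsub tp (V p.1) (W p.2)) (ContinuousLinearMap.adjoint (Rij p.1 p.2) (z p))) :
    (∀ (x : lp (fun i => Hi i) 2) (y : lp (fun j => Kj j) 2)
        (z : lp (fun p : ι × κ => Eij p.1 p.2) 2),
      (∀ p : ι × κ, z p = (tpij p.1 p.2).tmul (x p.1) (y p.2)) →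
        TΛΓ z = tp.tmul (TΛ x) (TΓ y)) ∧
    (∀ (f : H) (g : K) (p : ι × κ),
      (ContinuousLinearMap.adjoint TΛΓ) (tp.tmul f g) p =
        (tpij p.1 p.2).tmul ((ContinuousLinearMap.adjoint TΛ) f p.1)
          ((ContinuousLinearMap.adjoint TΓ) g p.2)) :=
  stmt_11_general tp tpij V W Λ Γ v w Rij hRij TΛ TΓ TΛΓ hTΛ hTΓ hTΛΓ
end
end
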